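/- Let A be an N×N real symmetric matrix with orthonormal eigenvectors v₂, v₃ ∈ ℝ^N satisfying A v₂ = λ₂ v₂ and A v₃ = λ₃ v₃, where λ₂ ≤ λ₃. Let a₂, a₃ be nonzero real numbers with λ₂ ≠ λ₃, let θ be a real shift with θ < λ₂, and set x₀ = a₂ v₂ + a₃ v₃, λ̃ = x₀ᵀ A x₀ / x₀ᵀ x₀, r₀ = (λ̃ − θ) x₀ − (A − θ I) x₀, α = r₀ᵀ r₀ / (r₀ᵀ (A − θ I) r₀), and x₁ = x₀ + α r₀. Then the coefficients b₂ = x₁ᵀ v₂ and b₃ = x₁ᵀ v₃ of x₁ in the eig「vector basis satisfy (λ₃ − θ) a₂ b₃ = (λ₂ − θ) a₃ b₂; that is, one CG iteration multiplies the ratio of the v₃-component to the v₂-component by the factor (λ₂ − θ)/(λ₃ − θ). -/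

import Mathlib

/-!
Write `μᵢ = λᵢ - θ` and `s = a₂² + a₃²`. Since `λ̃` is the Rayleigh quotient of `x₀`, the residual
`r₀ = λ̃ x₀ - A x₀` lies in span{v₂, v₃} and is orthogonal to `x₀`, so
`r₀ = k (a₃ v₂ - a₂ v₃)` with `k s = (λ₃ - λ₂) a₂ a₃`. The CG step length is then the reciprocal
of the Rayleigh quotient of `A - θ I` at the rotated vector, `α = s / (μ₂ a₃² + μ₃ a₂²)`, which is
well defined because `0 < μ₂ ≤ μ₃`. Substituting `b₂ = a₂ + α k a₃` and `b₃ = a₃ - α k a₂`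
turns the claim into `k s = (μ₃ - μ₂) a₂ a₃`.
-/

open Matrix

section OrthonormalPair

variable {n : Type*} [Fintype n] {v w : n → ℝ}

theorem dotProduct_pair (hv : v ⬝ᵥ v = 1) (hw : w ⬝ᵥ w = 1) (hvw : v ⬝ᵥ w = 0)
    (a b c d : ℝ) : (a • v + b • w) ⬝ᵥ (c • v + d • w) = a * c + b * d := by
  simp only [add_dotProduct, dotProduct_add, smul_dotProduct, dotProduct_smul, hv, hw, hvw,
    dotProduct_comm w v, smul_eq_mul]
  ring

theorem pair_dotProduct_left (hv : v ⬝ᵥ v = 1) (hw : w ⬝ᵥ w = 1) (hvw : v ⬝ᵥ w = 0)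
    (a b : ℝ) : (a • v + b • w) ⬝ᵥ v = a := by
  simpa using dotProduct_pair hv hw hvw a b 1 0

theorem pair_dotProduct_right (hv : v ⬝ᵥ v = 1) (hw : w ⬝ᵥ w = 1) (hvw : v ⬝ᵥ w = 0)
    (a b : ℝ) : (a • v + b • w) ⬝ᵥ w = b := by
  simpa using dotProduct_pair hv hw hvw a b 0 1

theorem mulVec_pair {A : Matrix n n ℝ} {μ ν : ℝ} (hAv : A *ᵥ v = μ • v) (hAw : A *ᵥ w = ν • w)
    (a b : ℝ) : A *ᵥ (a • v + b • w) = (μ * a) • v + (ν * b) • w := by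
  rw [mulVec_add, mulVec_smul, mulVec_smul, hAv, hAw, smul_smul, smul_smul, mul_comm a,
    mul_comm b]

theorem pair_dotProduct_mulVec_pair (hv : v ⬝ᵥ v = 1) (hw : w ⬝ᵥ w = 1) (hvw : v ⬝ᵥ w = 0)
    {A : Matrix n n ℝ} {μ ν : ℝ} (hAv : A *ᵥ v = μ • v) (hAw : A *ᵥ w = ν • w) (a b : ℝ) :
    (a • v + b • w) ⬝ᵥ A *ᵥ (a • v + b • w) = μ * a ^ 2 + ν * b ^ 2 := by
  rw [mulVec_pair hAv hAw, dotProduct_pair hv hw hvw]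
  ring

/-- The Rayleigh residual of a vector in an invariant plane is orthogonal to it, hence a multiple
of the vector rotated by a right angle. -/
theorem rayleigh_residual_pair (hv : v ⬝ᵥ v = 1) (hw : w ⬝ᵥ w = 1) (hvw : v ⬝ᵥ w = 0)
    {A : Matrix n n ℝ} {μ ν : ℝ} (hAv : A *ᵥ v = μ • v) (hAw : A *ᵥ w = ν • w) {a b : ℝ}
    (hab : a ^ 2 + b ^ 2 ≠ 0) {x : n → ℝ} (hx : x = a • v + b • w) :
    ((x ⬝ᵥ A *ᵥ x) / (x ⬝ᵥ x)) • x - A *ᵥ x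
      = ((ν - μ) * a * b / (a ^ 2 + b ^ 2)) • (b • v - a • w) := by
  have hxx : x ⬝ᵥ x = a ^ 2 + b ^ 2 := by
    rw [hx, dotProduct_pair hv hw hvw]
    ring
  rw [hxx, hx, pair_dotProduct_mulVec_pair hv hw hvw hAv hAw, mulVec_pair hAv hAw]
  match_scalars <;> field_simp <;> ring

end OrthonormalPair

theorem sub_smul_one_mulVec_of_mulVec_eq_smul {n : Type*} [Fintype n] [DecidableEq n]
    {A : Matrix n n ℝ} {v : n → ℝ} {μ : ℝ} (h : A *ᵥ v = μ • v) (θ : ℝ) :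
    (A - θ • (1 : Matrix n n ℝ)) *ᵥ v = (μ - θ) • v := by
  rw [sub_mulVec, smul_mulVec, one_mulVec, h, sub_smul]

/-- If `k = 0` the step does nothing, and `(μ₃ - μ₂) a₂ a₃ = 0` makes the claim trivial;
otherwise `α = (a₂² + a₃²) / (μ₂ a₃² + μ₃ a₂²)`. -/
theorem cg_coeff_ratio {μ₂ μ₃ a₂ a₃ k α : ℝ} (hE : μ₂ * a₃ ^ 2 + μ₃ * a₂ ^ 2 ≠ 0)
    (hk : k * (a₂ ^ 2 + a₃ ^ 2) = (μ₃ - μ₂) * a₂ * a₃)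
    (hα : α = ((k * a₃) ^ 2 + (k * a₂) ^ 2) / (μ₂ * (k * a₃) ^ 2 + μ₃ * (k * a₂) ^ 2)) :
    μ₃ * a₂ * (a₃ - α * (k * a₂)) = μ₂ * a₃ * (a₂ + α * (k * a₃)) := by
  rcases eq_or_ne k 0 with rfl | hk0
  · linear_combination -hk
  have hαE : α * (μ₂ * a₃ ^ 2 + μ₃ * a₂ ^ 2) = a₂ ^ 2 + a₃ ^ 2 := by
    have hden : μ₂ * (k * a₃) ^ 2 + μ₃ * (k * a₂) ^ 2 = k ^ 2 * (μ₂ * a₃ ^ 2 + μ₃ * a₂ ^ 2) := by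
      ring
    rw [hα, hden, div_mul_eq_mul_div, div_eq_iff (mul_ne_zero (pow_ne_zero 2 hk0) hE)]
    ring
  linear_combination -hk - k * hαE

theorem one_cg_step_ratio_general
    (N : ℕ)
    (A : Matrix (Fin N) (Fin N) ℝ)
    (v2 v3 : Fin N → ℝ)
    (hv2 : v2 ⬝ᵥ v2 = 1) (hv3 : v3 ⬝ᵥ v3 = 1) (hv23 : v2 ⬝ᵥ v3 = 0)
    (lam2 lam3 : ℝ) (hord : lam2 ≤ lam3)
    (heig2 : A.mulVec v2 = lam2 • v2) (heig3 : A.mulVec v3 = lam3 • v3)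
    (a2 a3 : ℝ) (ha2 : a2 ≠ 0)
    (θ : ℝ) (hθ : θ < lam2)
    (x0 : Fin N → ℝ) (hx0 : x0 = a2 • v2 + a3 • v3)
    (lamt : ℝ) (hlamt : lamt = (x0 ⬝ᵥ A.mulVec x0) / (x0 ⬝ᵥ x0))
    (r0 : Fin N → ℝ)
    (hr0 : r0 = (lamt - θ) • x0
        - (A - θ • (1 : Matrix (Fin N) (Fin N) ℝ)).mulVec x0)
    (α : ℝ)
    (hα : α = (r0 ⬝ᵥ r0)
        / (r0 ⬝ᵥ (A - θ • (1 : Matrix (Fin N) (Fin N) ℝ)).mulVec r0))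
    (x1 : Fin N → ℝ) (hx1 : x1 = x0 + α • r0)
    (b2 b3 : ℝ) (hb2 : b2 = x1 ⬝ᵥ v2) (hb3 : b3 = x1 ⬝ᵥ v3) :
    (lam3 - θ) * a2 * b3 = (lam2 - θ) * a3 * b2 := by
  have hs : a2 ^ 2 + a3 ^ 2 ≠ 0 := by positivity
  set k := (lam3 - lam2) * a2 * a3 / (a2 ^ 2 + a3 ^ 2) with hk
  have hr0k : r0 = (k * a3) • v2 + (-(k * a2)) • v3 := by
    rw [hr0, sub_mulVec, smul_mulVec, one_mulVec, hlamt, sub_smul, sub_sub_sub_cancel_right,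
      rayleigh_residual_pair hv2 hv3 hv23 heig2 heig3 hs hx0]
    module
  have hB2 := sub_smul_one_mulVec_of_mulVec_eq_smul heig2 θ
  have hB3 := sub_smul_one_mulVec_of_mulVec_eq_smul heig3 θ
  have hαk : α = ((k * a3) ^ 2 + (k * a2) ^ 2)
      / ((lam2 - θ) * (k * a3) ^ 2 + (lam3 - θ) * (k * a2) ^ 2) := by
    rw [hα, hr0k, dotProduct_pair hv2 hv3 hv23, pair_dotProduct_mulVec_pair hv2 hv3 hv23 hB2 hB3]
    ring_nf
  have hx1k : x1 = (a2 + α * (k * a3)) • v2 + (a3 - α * (k * a2)) • v3 := by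
    rw [hx1, hx0, hr0k]
    module
  rw [hb2, hb3, hx1k, pair_dotProduct_left hv2 hv3 hv23, pair_dotProduct_right hv2 hv3 hv23]
  refine cg_coeff_ratio ?_ ?_ hαk
  · have : 0 < lam3 - θ := by linarith
    have : 0 ≤ lam2 - θ := by linarith
    positivity
  · rw [hk, div_mul_cancel₀ _ hs]
    ring

/-- One CG iteration multiplies the ratio of the `v₃`-component to the
`v₂`-component by the factor `(λ₂ - θ)/(λ₃ - θ)`:
`(λ₃ - θ) a₂ b₃ = (λ₂ - θ) a₃ b₂` where `b₂ = x₁ᵀ v₂`, `b₃ = x₁ᵀ v₃`. -/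
theorem one_cg_step_ratio
    (N : ℕ)
    (A : Matrix (Fin N) (Fin N) ℝ) (hA : A.IsSymm)
    (v2 v3 : Fin N → ℝ)
    (hv2 : v2 ⬝ᵥ v2 = 1) (hv3 : v3 ⬝ᵥ v3 = 1) (hv23 : v2 ⬝ᵥ v3 = 0)
    (lam2 lam3 : ℝ) (hord : lam2 ≤ lam3) (hne : lam2 ≠ lam3)
    (heig2 : A.mulVec v2 = lam2 • v2) (heig3 : A.mulVec v3 = lam3 • v3)
    (a2 a3 : ℝ) (ha2 : a2 ≠ 0) (ha3 : a3 ≠ 0)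
    (θ : ℝ) (hθ : θ < lam2)
    (x0 : Fin N → ℝ) (hx0 : x0 = a2 • v2 + a3 • v3)
    (lamt : ℝ) (hlamt : lamt = (x0 ⬝ᵥ A.mulVec x0) / (x0 ⬝ᵥ x0))
    (r0 : Fin N → ℝ)
    (hr0 : r0 = (lamt - θ) • x0
        - (A - θ • (1 : Matrix (Fin N) (Fin N) ℝ)).mulVec x0)
    (α : ℝ)
    (hα : α = (r0 ⬝ᵥ r0)
        / (r0 ⬝ᵥ (A - θ • (1 : Matrix (Fin N) (Fin N) ℝ)).mulVec r0))
    (x1 : Fin N → ℝ) (hx1 : x1 = x0 + α • r0)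
    (b2 b3 : ℝ) (hb2 : b2 = x1 ⬝ᵥ v2) (hb3 : b3 = x1 ⬝ᵥ v3) :
    (lam3 - θ) * a2 * b3 = (lam2 - θ) * a3 * b2 :=
  one_cg_step_ratio_general N A v2 v3 hv2 hv3 hv23 lam2 lam3 hord heig2 heig3 a2 a3 ha2 θ hθ x0 hx0
    lamt hlamt r0 hr0 α hα x1 hx1 b2 b3 hb2 hb3
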